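/- arXiv:2605.10468 — 2 statements merged into one kernel-verified Lean document; each statement's English description precedes it below -/
import Mathlib

section
/- Under the SignGD iteration on $L(W) = \frac{1}{2}\|Wx-y\|_2^2$ starting from $W_0 = 0$, every iterate has the form $W_t = w_t\,\mathrm{sign}(x)^\top$ for some $w_t \in \mathbb{R}^m$, where $w_0 = 0$ and $w_{t+1} = w_t - \eta_t\,\mathrm{sign}(w_t\|x\|_1 - y)$ (entrywise sign). -/
open Filter Matrix

noncomputable def l2 {n : ℕ} (v : Fin n → ℝ) : ℝ := Real.sqrt (∑ i, v i ^ 2)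
noncomputable def l1 {n : ℕ} (v : Fin n → ℝ) : ℝ := ∑ i, |v i|
noncomputable def linf {n : ℕ} (v : Fin n → ℝ) : ℝ := ⨆ i, |v i|
noncomputable def maxNorm {m n : ℕ} (W : Matrix (Fin m) (Fin n) ℝ) : ℝ := ⨆ i, ⨆ j, |W i j|
noncomputable def spec {m n : ℕ} (W : Matrix (Fin m) (Fin n) ℝ) : ℝ :=
  sSup {c | ∃ v : Fin n → ℝ, l2 v = 1 ∧ c = l2 (W.mulVec v)}
noncomputable def l0 {n : ℕ} (v : Fin n → ℝ) : ℕ := (Finset.univ.filter fun j => v j ≠ 0).card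

lemma sign_mul' (a b : ℝ) : Real.sign (a*b) = Real.sign a * Real.sign b := by
  rcases lt_trichotomy a 0 with ha|ha|ha <;> rcases lt_trichotomy b 0 with hb|hb|hb <;>
    simp_all [Real.sign_of_pos, Real.sign_of_neg, Real.sign_zero, mul_pos,
      mul_pos_of_neg_of_neg, mul_neg_of_pos_of_neg, mul_neg_of_neg_of_pos]

lemma rsign_mul_self (a : ℝ) : Real.sign a * a = |a| := by
  rcases lt_trichotomy a 0 with ha|ha|ha <;>
    simp_all [Real.sign_of_pos, Real.sign_of_neg, abs_of_pos, abs_of_neg]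

theorem stmt6 {m n : ℕ} (x : Fin n → ℝ) (hx : x ≠ 0) (y : Fin m → ℝ)
    (η : ℕ → ℝ) (hpos : ∀ t, 0 < η t)
    (W : ℕ → Matrix (Fin m) (Fin n) ℝ) (hW0 : W 0 = 0)
    (hrec : ∀ t i j, W (t + 1) i j
      = W t i j - η t * Real.sign (((W t).mulVec x i - y i) * x j)) :
    ∃ w : ℕ → (Fin m → ℝ), w 0 = 0 ∧
      (∀ t i, w (t + 1) i = w t i - η t * Real.sign (w t i * l1 x - y i)) ∧
      (∀ t i j, W t i j = w t i * Real.sign (x j)) := by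
  classical
  let w : ℕ → (Fin m → ℝ) := fun t => Nat.rec (motive := fun _ => Fin m → ℝ) 0
    (fun t wt i => wt i - η t * Real.sign (wt i * l1 x - y i)) t
  have hw0 : w 0 = 0 := rfl
  have hwrec : ∀ t i, w (t+1) i = w t i - η t * Real.sign (w t i * l1 x - y i) :=
    fun t i => rfl
  refine ⟨w, hw0, hwrec, ?_⟩
  intro t
  induction t with
  | zero => intro i j; simp [hw0, hW0]
  | succ t ih =>
    intro i j
    have hmv : (W t).mulVec x i = w t i * l1 x := by
      simp only [Matrix.mulVec, dotProduct]
      calc ∑ j, W t i j * x j = ∑ j, w t i * (Real.sign (x j) * x j) := by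
            refine Finset.sum_congr rfl fun j _ => by rw [ih i j]; ring
        _ = w t i * l1 x := by
            rw [← Finset.mul_sum, l1]
            congr 1
            exact Finset.sum_congr rfl fun j _ => rsign_mul_self (x j)
    rw [hrec, hwrec, ih, hmv, sign_mul']
    ring
end

section
/- Under idealized Muon on $L(W)=\frac12\|Wx-y\|_2^2$ starting from $W_0 = 0$ with $x, y \ne 0$, every iterate has the form $W_t = \alpha_t\, yx^\top/\|x\|_2^2$ for scalars $\alpha_t$ satisfying $\alpha_0 = 0$ and $\alpha_{t+1} = \alpha_t - \beta_t\,\mathrm{sign}(\alpha_t - 1)$ where $\beta_t = \eta_t\|x\|_2/\|y\|_2$. -/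
open Filter Matrix

noncomputable def orthoR1 {m n : ℕ} (r : Fin m → ℝ) (x : Fin n → ℝ) :
    Matrix (Fin m) (Fin n) ℝ :=
  if r = 0 ∨ x = 0 then 0 else (l2 r * l2 x)⁻¹ • vecMulVec r x

lemma l2_pos {n : ℕ} {v : Fin n → ℝ} (hv : v ≠ 0) : 0 < l2 v := by
  apply Real.sqrt_pos.2
  obtain ⟨i, hi⟩ := Function.ne_iff.1 hv
  exact Finset.sum_pos' (fun j _ => sq_nonneg _)
    ⟨i, Finset.mem_univ i, pow_two_pos_of_ne_zero hi⟩

lemma l2_sq {n : ℕ} (v : Fin n → ℝ) : (l2 v) ^ 2 = ∑ i, v i ^ 2 := by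
  rw [l2, Real.sq_sqrt (Finset.sum_nonneg fun i _ => sq_nonneg _)]

lemma l2_smul {n : ℕ} (c : ℝ) (v : Fin n → ℝ) : l2 (c • v) = |c| * l2 v := by
  unfold l2
  rw [← Real.sqrt_sq_eq_abs, ← Real.sqrt_mul (sq_nonneg _), Finset.mul_sum]
  congr 1
  exact Finset.sum_congr rfl fun i _ => by simp [mul_pow]

lemma vecMulVec_mulVec {m n : ℕ} (y : Fin m → ℝ) (x : Fin n → ℝ) :
    (vecMulVec y x).mulVec x = ((l2 x) ^ 2) • y := by
  ext i
  simp only [mulVec, dotProduct, vecMulVec_apply, Pi.smul_apply, smul_eq_mul, l2_sq,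
    Finset.sum_mul]
  exact Finset.sum_congr rfl fun j _ => by ring

theorem stmt9 {m n : ℕ} (x : Fin n → ℝ) (hx : x ≠ 0) (y : Fin m → ℝ) (hy : y ≠ 0)
    (η : ℕ → ℝ) (hpos : ∀ t, 0 < η t)
    (W : ℕ → Matrix (Fin m) (Fin n) ℝ) (hW0 : W 0 = 0)
    (hrec : ∀ t, W (t + 1) = W t - η t • orthoR1 ((W t).mulVec x - y) x) :
    ∃ α : ℕ → ℝ, α 0 = 0 ∧
      (∀ t, α (t + 1) = α t - (η t * l2 x / l2 y) * Real.sign (α t - 1)) ∧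
      (∀ t, W t = α t • ((l2 x) ^ 2)⁻¹ • vecMulVec y x) := by
  have hx2 : (0:ℝ) < l2 x := l2_pos hx
  have hy2 : (0:ℝ) < l2 y := l2_pos hy
  have hx0 : l2 x ≠ 0 := ne_of_gt hx2
  have hy0 : l2 y ≠ 0 := ne_of_gt hy2
  set α : ℕ → ℝ := fun t => Nat.rec 0
    (fun t a => a - (η t * l2 x / l2 y) * Real.sign (a - 1)) t with hα
  refine ⟨α, rfl, fun t => rfl, ?_⟩
  intro t
  induction t with
  | zero => simp [hW0, hα]
  | succ t ih =>
    rw [hrec t, ih]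
    have hmv : (α t • ((l2 x) ^ 2)⁻¹ • vecMulVec y x).mulVec x - y = (α t - 1) • y := by
      rw [Matrix.smul_mulVec, Matrix.smul_mulVec, vecMulVec_mulVec,
        inv_smul_smul₀ (by positivity), sub_smul, one_smul]
    rw [hmv]
    by_cases h1 : α t = 1
    · have hs : α (t + 1) = α t := by
        show α t - _ * Real.sign (α t - 1) = α t
        simp [h1]
      rw [hs]
      have : orthoR1 ((α t - 1) • y) x = 0 := by
        rw [orthoR1, if_pos (Or.inl (by simp [h1]))]
      rw [this]; simp
    · have hne : (α t - 1) • y ≠ 0 := smul_ne_zero (sub_ne_zero.2 h1) hy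
      have hortho : orthoR1 ((α t - 1) • y) x
          = (Real.sign (α t - 1) * (l2 y * l2 x)⁻¹) • vecMulVec y x := by
        rw [orthoR1, if_neg (by push_neg; exact ⟨hne, hx⟩)]
        have hvv : vecMulVec ((α t - 1) • y) x = (α t - 1) • vecMulVec y x := by
          ext i j; simp [vecMulVec, mul_assoc]
        rw [hvv, l2_smul, smul_smul]
        congr 1
        rcases (sub_ne_zero.2 h1).lt_or_gt with ha | ha
        · rw [Real.sign_of_neg ha, abs_of_neg ha]
          have h1a : (0:ℝ) < 1 - α t := by linarith
          field_simp
        · rw [Real.sign_of_pos ha, abs_of_pos ha]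
          field_simp
      rw [hortho]
      have hrec' : α (t + 1) = α t - (η t * l2 x / l2 y) * Real.sign (α t - 1) := rfl
      rw [hrec', smul_smul, smul_smul, smul_smul, ← sub_smul]
      congr 1
      field_simp
end
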